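/- arXiv:1903.00176 — 4 statements merged into one kernel-verified Lean document; each statement's English description precedes it below -/
import Mathlib

section
/- Let t > s > 0 be positive integers and let t ≥ u ≥ s. Suppose {p_k^{(t,s)}}_{k≥0} and {q_ℓ^{(t,s)}}_{ℓ≥0} are families of monic polynomials (p_k of degree k, q_ℓ of degree ℓ) satisfying the bi-orthogonality relation ∫∫_{ℝ²} p_k^{(t,s)}(y) κ_{t−s}(y−x) q_ℓ^{(t,s)}(x) w_{N(s−1),1}(x) dx dy = h_ℓ^{(t,s)} δ_{k,ℓ} with positive constants h_ℓ^{(t,s)}. Define P_k^{(t,u,s)}(z) = ∫_ℝ p_k^{(t,s)}(y) κ_{t−u}(y−z) dy for s ≤ u < t and P_k^{(t,t,s)}(z) = p_k^{(t,s)}(z); and Q_ℓ^{(t,u,s)}(z) = ∫_ℝ κ_{u−s}(z−x) q_ℓ^{(t,s)}(x) w_{N(s−1),1}(x) dx for s < u ≤ t and Q_ℓ^{(t,s,s)}(z) = q_ℓ^{(t,s)}(z) w_{N(s−1),1}(z). Then ∫_ℝ P_k^{(t,u,s)}(z) Q_ℓ^{(t,u,s)}(z) dz = h_ℓ^{(t,s)}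 δ_{k,ℓ} for all k,ℓ ≥ 0. -/
open MeasureTheory

/-- The gamma weight `w_{a,b}(x) = b^{a+1}/Γ(a+1) · x^a e^{-bx}` for `x > 0`,
and `0` otherwise. -/
noncomputable def w (a b x : ℝ) : ℝ :=
  if 0 < x then b ^ (a + 1) / Real.Gamma (a + 1) * x ^ a * Real.exp (-(b * x)) else 0

/-- `κ_τ(x) := w_{Nτ-1,1}(x)`. -/
noncomputable def kappa (N : ℕ) (τ : ℝ) (x : ℝ) : ℝ :=
  w ((N : ℝ) * τ - 1) 1 x

/-!
The gamma kernels form a convolution semigroup,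
`∫ w_{a,1}(y - z) w_{b,1}(z - x) dz = w_{a+b+1,1}(y - x)` (a Beta integral), so
`κ_{t-u} ⋆ κ_{u-s} = κ_{t-s}` and, after Fubini, `∫ P_k Q_ℓ` is the original double integral.
Fubini is justified because, after the substitution `y = v + x`, the Taylor expansion of
`p(v + x)` splits the integrand into a sum of products of an integrable function of `v` and one
of `x`; the same expansion shows that `P_k` is a polynomial.
-/

open Polynomial

theorem w_of_nonpos {a b x : ℝ} (hx : x ≤ 0) : w a b x = 0 := if_neg hx.not_gt

theorem w_one_of_pos {a x : ℝ} (hx : 0 < x) :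
    w a 1 x = x ^ a * Real.exp (-x) / Real.Gamma (a + 1) := by
  rw [w, if_pos hx, Real.one_rpow, one_mul]
  ring

theorem intervalIntegral_rpow_mul_sub_rpow {a b c : ℝ} (ha : -1 < a) (hb : -1 < b) (hc : 0 < c) :
    ∫ z in (0 : ℝ)..c, z ^ b * (c - z) ^ a
      = c ^ (a + b + 1) * (Real.Gamma (b + 1) * Real.Gamma (a + 1) / Real.Gamma (a + b + 2)) := by
  have key := Complex.betaIntegral_scaled (b + 1 : ℝ) (a + 1 : ℝ) hc
  rw [Complex.betaIntegral_eq_Gamma_mul_div _ _ (by simpa using by linarith)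
    (by simpa using by linarith)] at key
  have hsum : ((b + 1 : ℝ) : ℂ) + ((a + 1 : ℝ) : ℂ) = ((a + b + 2 : ℝ) : ℂ) := by push_cast; ring
  rw [hsum, show ((a + b + 2 : ℝ) : ℂ) - 1 = ((a + b + 1 : ℝ) : ℂ) by push_cast; ring,
    ← Complex.ofReal_cpow hc.le, Complex.Gamma_ofReal, Complex.Gamma_ofReal,
    Complex.Gamma_ofReal] at key
  apply Complex.ofReal_injective
  rw [← intervalIntegral.integral_ofReal]
  push_cast at key ⊢
  rw [← key]
  refine intervalIntegral.integral_congr fun z hz => ?_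
  rw [Set.uIcc_of_le hc.le] at hz
  simp only [add_sub_cancel_right]
  rw [Complex.ofReal_cpow hz.1, Complex.ofReal_cpow (sub_nonneg.2 hz.2)]
  push_cast
  rfl

theorem integral_w_sub_mul_w {a b : ℝ} (ha : -1 < a) (hb : -1 < b) (c : ℝ) :
    ∫ z, w a 1 (c - z) * w b 1 z = w (a + b + 1) 1 c := by
  rcases le_or_gt c 0 with hc | hc
  · have hzero (z : ℝ) : w a 1 (c - z) * w b 1 z = 0 := by
      rcases le_or_gt z 0 with hz | hz
      · rw [w_of_nonpos hz, mul_zero]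
      · rw [w_of_nonpos (by linarith), zero_mul]
    simp only [hzero, integral_zero, w_of_nonpos hc]
  have hsupp : ∀ z ∉ Set.Ioo 0 c, w a 1 (c - z) * w b 1 z = 0 := by
    intro z hz
    rcases le_or_gt z 0 with hz0 | hz0
    · rw [w_of_nonpos hz0, mul_zero]
    · rw [w_of_nonpos (by simp_all), zero_mul]
  have hformula : Set.EqOn (fun z => w a 1 (c - z) * w b 1 z)
      (fun z => Real.exp (-c) / (Real.Gamma (a + 1) * Real.Gamma (b + 1)) * (z ^ b * (c - z) ^ a))
      (Set.Ioo 0 c) := by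
    intro z hz
    simp only [w_one_of_pos hz.1, w_one_of_pos (sub_pos.2 hz.2)]
    rw [show -c = -(c - z) + -z by ring, Real.exp_add]
    field_simp
  rw [← setIntegral_eq_integral_of_forall_compl_eq_zero hsupp,
    setIntegral_congr_fun measurableSet_Ioo hformula, integral_const_mul,
    ← integral_Ioc_eq_integral_Ioo, ← intervalIntegral.integral_of_le hc.le,
    intervalIntegral_rpow_mul_sub_rpow ha hb hc, w_one_of_pos hc,
    show a + b + 1 + 1 = a + b + 2 by ring]
  have := Real.Gamma_pos_of_pos (show 0 < a + 1 by linarith)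
  have := Real.Gamma_pos_of_pos (show 0 < b + 1 by linarith)
  have := Real.Gamma_pos_of_pos (show 0 < a + b + 2 by linarith)
  field_simp

theorem integral_w_sub_mul_w_sub {a b : ℝ} (ha : -1 < a) (hb : -1 < b) (y x : ℝ) :
    ∫ z, w a 1 (y - z) * w b 1 (z - x) = w (a + b + 1) 1 (y - x) := by
  rw [← integral_w_sub_mul_w ha hb, ← integral_add_right_eq_self _ x]
  congr 1 with z
  rw [add_sub_cancel_right, sub_add_eq_sub_sub, sub_right_comm]

theorem integrable_pow_mul_w (i : ℕ) {a : ℝ} (ha : -1 < a) :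
    Integrable (fun x => x ^ i * w a 1 x) := by
  have hgamma := (Real.GammaIntegral_convergent (show 0 < a + i + 1 by linarith)).const_mul
    (Real.Gamma (a + 1))⁻¹
  refine (integrable_indicator_iff measurableSet_Ioi).2 hgamma |>.congr
    (Filter.Eventually.of_forall fun x => ?_)
  rcases le_or_gt x 0 with hx | hx
  · simp [hx, w_of_nonpos]
  · dsimp only
    rw [Set.indicator_of_mem (Set.mem_Ioi.2 hx), w_one_of_pos hx, add_sub_cancel_right,
      Real.rpow_add hx, Real.rpow_natCast]
    ring

def HasPolynomialMoments (g : ℝ → ℝ) : Prop :=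
  ∀ r : ℝ[X], Integrable (fun x => r.eval x * g x)

theorem hasPolynomialMoments_w {a : ℝ} (ha : -1 < a) : HasPolynomialMoments (w a 1) := by
  intro r
  induction r using Polynomial.induction_on' with
  | add p q hp hq => simp only [eval_add, add_mul]; exact hp.add hq
  | monomial n c =>
    simpa only [eval_monomial, mul_assoc] using (integrable_pow_mul_w n ha).const_mul c

theorem HasPolynomialMoments.eval_mul {g : ℝ → ℝ} (hg : HasPolynomialMoments g) (q : ℝ[X]) :
    HasPolynomialMoments (fun x => q.eval x * g x) := fun r => by
  have h := hg (r * q)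
  simp only [Polynomial.eval_mul, mul_assoc] at h
  exact h

theorem HasPolynomialMoments.comp_sub_right {g : ℝ → ℝ} (hg : HasPolynomialMoments g) (c : ℝ) :
    HasPolynomialMoments (fun x => g (x - c)) := fun r => by
  have h := (hg (taylor c r)).comp_sub_right c
  simp only [taylor_eval, sub_add_cancel] at h
  exact h

theorem eval_add_eq_sum_hasseDeriv (r : ℝ[X]) (v x : ℝ) :
    r.eval (v + x) = ∑ i ∈ Finset.range (r.natDegree + 1), (hasseDeriv i r).eval x * v ^ i := by
  rw [← taylor_eval, eval_eq_sum_range' (n := r.natDegree + 1)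
    (by rw [natDegree_taylor]; exact Nat.lt_succ_self _)]
  simp only [taylor_coeff]

theorem integrable_eval_mul_w_sub_mul (r : ℝ[X]) {a : ℝ} (ha : -1 < a) {g : ℝ → ℝ}
    (hg : HasPolynomialMoments g) :
    Integrable (fun yx : ℝ × ℝ => r.eval yx.1 * w a 1 (yx.1 - yx.2) * g yx.2)
      ((volume : Measure ℝ).prod volume) := by
  have hsplit : Integrable (fun vx : ℝ × ℝ => r.eval (vx.1 + vx.2) * w a 1 vx.1 * g vx.2)
      ((volume : Measure ℝ).prod volume) := by
    have hsum := integrable_finsetSum (Finset.range (r.natDegree + 1)) fun i _ =>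
      (integrable_pow_mul_w i ha).mul_prod (hg (hasseDeriv i r))
    refine hsum.congr (Filter.Eventually.of_forall fun vx => ?_)
    simp only [eval_add_eq_sum_hasseDeriv, Finset.sum_mul]
    exact Finset.sum_congr rfl fun i _ => by ring
  have h := (measurePreserving_sub_prod volume volume).integrable_comp_of_integrable hsplit
  simp only [Function.comp_def, sub_add_cancel] at h
  exact h

theorem integral_integral_eval_mul_w_sub_mul_swap (r : ℝ[X]) {a : ℝ} (ha : -1 < a) {g : ℝ → ℝ}
    (hg : HasPolynomialMoments g) :
    ∫ y, ∫ x, r.eval y * w a 1 (y - x) * g x = ∫ x, ∫ y, r.eval y * w a 1 (y - x) * g x :=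
  integral_integral_swap (integrable_eval_mul_w_sub_mul r ha hg)

theorem exists_eval_eq_integral_eval_mul_w_sub (r : ℝ[X]) {a : ℝ} (ha : -1 < a) :
    ∃ R : ℝ[X], ∀ z, ∫ y, r.eval y * w a 1 (y - z) = R.eval z := by
  refine ⟨∑ i ∈ Finset.range (r.natDegree + 1), C (∫ v, v ^ i * w a 1 v) * hasseDeriv i r,
    fun z => ?_⟩
  rw [← integral_add_right_eq_self _ z]
  simp only [add_sub_cancel_right, eval_add_eq_sum_hasseDeriv, Finset.sum_mul, eval_finsetSum,
    eval_mul, eval_C, mul_assoc]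
  rw [integral_finsetSum _ fun i _ => (integrable_pow_mul_w i ha).const_mul _]
  exact Finset.sum_congr rfl fun i _ => by rw [integral_const_mul, mul_comm]

theorem integral_integral_eval_mul_w_sub_mul_w_sub (r : ℝ[X]) {a b : ℝ} (ha : -1 < a)
    (hb : -1 < b) (x : ℝ) :
    ∫ z, (∫ y, r.eval y * w a 1 (y - z)) * w b 1 (z - x)
      = ∫ y, r.eval y * w (a + b + 1) 1 (y - x) := calc
  _ = ∫ z, ∫ y, r.eval y * w a 1 (y - z) * w b 1 (z - x) := by simp only [integral_mul_const]
  _ = ∫ y, ∫ z, r.eval y * w a 1 (y - z) * w b 1 (z - x) :=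
    (integral_integral_eval_mul_w_sub_mul_swap r ha
      ((hasPolynomialMoments_w hb).comp_sub_right x)).symm
  _ = _ := by simp only [mul_assoc, integral_const_mul, integral_w_sub_mul_w_sub ha hb]

theorem integral_integral_eval_mul_w_sub_mul_eq (r : ℝ[X]) {a : ℝ} (ha : -1 < a) {g : ℝ → ℝ}
    (hg : HasPolynomialMoments g) :
    ∫ z, (∫ y, r.eval y * w a 1 (y - z)) * g z = ∫ y, ∫ x, r.eval y * w a 1 (y - x) * g x := by
  simp only [integral_integral_eval_mul_w_sub_mul_swap r ha hg, integral_mul_const]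

theorem integral_integral_eval_mul_w_sub_mul_integral (r : ℝ[X]) {a b : ℝ} (ha : -1 < a)
    (hb : -1 < b) {g : ℝ → ℝ} (hg : HasPolynomialMoments g) :
    ∫ z, (∫ y, r.eval y * w a 1 (y - z)) * ∫ x, w b 1 (z - x) * g x
      = ∫ y, ∫ x, r.eval y * w (a + b + 1) 1 (y - x) * g x := by
  obtain ⟨R, hR⟩ := exists_eval_eq_integral_eval_mul_w_sub r ha
  calc _ = ∫ z, ∫ x, R.eval z * w b 1 (z - x) * g x := by
        simp only [hR, mul_assoc, integral_const_mul]
    _ = ∫ x, (∫ z, (∫ y, r.eval y * w a 1 (y - z)) * w b 1 (z - x)) * g x := by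
        simp only [integral_integral_eval_mul_w_sub_mul_swap R hb hg, integral_mul_const, hR]
    _ = _ := by
        simp only [integral_integral_eval_mul_w_sub_mul_w_sub r ha hb,
          integral_integral_eval_mul_w_sub_mul_swap r (by linarith : -1 < a + b + 1) hg,
          integral_mul_const]

theorem biorthogonality_propagation_general (N : ℕ) (hN : 0 < N) (t s u : ℕ)
    (hs : 0 < s) (hst : s < t) (hsu : s ≤ u) (hut : u ≤ t)
    (p q : ℕ → Polynomial ℝ) (h : ℕ → ℝ)
    (hbi : ∀ k l, (∫ y : ℝ, ∫ x : ℝ,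
        (p k).eval y * kappa N ((t : ℝ) - s) (y - x) * (q l).eval x
          * w ((N : ℝ) * ((s : ℝ) - 1)) 1 x)
      = if k = l then h l else 0)
    (k l : ℕ) :
    (∫ z : ℝ,
        (if u = t then (p k).eval z
         else ∫ y : ℝ, (p k).eval y * kappa N ((t : ℝ) - u) (y - z))
        * (if u = s then (q l).eval z * w ((N : ℝ) * ((s : ℝ) - 1)) 1 z
           else ∫ x : ℝ, kappa N ((u : ℝ) - s) (z - x) * (q l).eval x
              * w ((N : ℝ) * ((s : ℝ) - 1)) 1 x))
      = if k = l then h l else 0 := by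
  have hg := (hasPolynomialMoments_w (a := (N : ℝ) * ((s : ℝ) - 1))
    (by nlinarith [(by exact_mod_cast hs : (1 : ℝ) ≤ s)])).eval_mul (q l)
  have hshape {σ τ : ℕ} (hστ : σ < τ) : -1 < (N : ℝ) * ((τ : ℝ) - σ) - 1 := by
    have : (0 : ℝ) < (τ : ℝ) - σ := sub_pos.2 (by exact_mod_cast hστ)
    nlinarith [(by exact_mod_cast hN : (0 : ℝ) < N)]
  rw [← hbi k l]
  rcases hut.eq_or_lt with rfl | hut
  · simp only [if_neg hst.ne', ↓reduceIte, kappa, mul_assoc, integral_const_mul]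
  rcases hsu.eq_or_lt with rfl | hsu
  · simp only [if_neg hut.ne, ↓reduceIte]
    simpa only [kappa, mul_assoc] using
      integral_integral_eval_mul_w_sub_mul_eq (p k) (hshape hst) hg
  · simp only [if_neg hut.ne, if_neg hsu.ne']
    have := integral_integral_eval_mul_w_sub_mul_integral (p k) (hshape hut) (hshape hsu) hg
    rw [show (N : ℝ) * ((t : ℝ) - u) - 1 + ((N : ℝ) * ((u : ℝ) - s) - 1) + 1
      = (N : ℝ) * ((t : ℝ) - s) - 1 by ring] at this
    simpa only [kappa, mul_assoc] using this

/-- Propagation of bi-orthogonality: if `{p_k}` and `{q_ℓ}` are monic families,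
`deg p_k = k`, `deg q_ℓ = ℓ`, bi-orthogonal with respect to the pairing
`(p,q) ↦ ∫∫ p(y) κ_{t-s}(y-x) q(x) w_{N(s-1),1}(x) dx dy` with positive norms
`h_ℓ`, then the transformed functions
`P_k(z) = ∫ p_k(y) κ_{t-u}(y-z) dy` (for `u < t`; `P_k = p_k` for `u = t`) and
`Q_ℓ(z) = ∫ κ_{u-s}(z-x) q_ℓ(x) w_{N(s-1),1}(x) dx` (for `u > s`;
`Q_ℓ = q_ℓ · w_{N(s-1),1}` for `u = s`) satisfy `∫ P_k(z) Q_ℓ(z) dz = h_ℓ δ_{kℓ}`. -/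
theorem biorthogonality_propagation (N : ℕ) (hN : 0 < N) (t s u : ℕ)
    (hs : 0 < s) (hst : s < t) (hsu : s ≤ u) (hut : u ≤ t)
    (p q : ℕ → Polynomial ℝ) (h : ℕ → ℝ)
    (hpmonic : ∀ k, (p k).Monic) (hpdeg : ∀ k, (p k).natDegree = k)
    (hqmonic : ∀ l, (q l).Monic) (hqdeg : ∀ l, (q l).natDegree = l)
    (hpos : ∀ l, 0 < h l)
    (hbi : ∀ k l, (∫ y : ℝ, ∫ x : ℝ,
        (p k).eval y * kappa N ((t : ℝ) - s) (y - x) * (q l).eval x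
          * w ((N : ℝ) * ((s : ℝ) - 1)) 1 x)
      = if k = l then h l else 0)
    (k l : ℕ) :
    (∫ z : ℝ,
        (if u = t then (p k).eval z
         else ∫ y : ℝ, (p k).eval y * kappa N ((t : ℝ) - u) (y - z))
        * (if u = s then (q l).eval z * w ((N : ℝ) * ((s : ℝ) - 1)) 1 z
           else ∫ x : ℝ, kappa N ((u : ℝ) - s) (z - x) * (q l).eval x
              * w ((N : ℝ) * ((s : ℝ) - 1)) 1 x))
      = if k = l then h l else 0 :=
  biorthogonality_propagation_general N hN t s u hs hst hsu hut p q h hbi k l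
end

section
/- Let t > s > 0 be positive integers and N a positive integer. For every integer n ≥ 0, the moment determinant D_n^{(t,s)} := det_{0≤k,ℓ≤n}( M_{k,ℓ}^{(t,s)} ), where M_{k,ℓ}^{(t,s)} = ∫∫_{ℝ²} y^k κ_{t−s}(y−x) x^ℓ w_{N(s−1),1}(x) dx dy, equals ∏_{k=0}^{n} Γ(N(s−1)+k+1)Γ(k+1)/Γ(N(s−1)+1), and in particular D_n^{(t,s)} > 0. -/
open MeasureTheory

/-!
Substituting `u = y - x` and expanding `(u + x)^k` binomially factors the moment matrix as
`M = A H`, where `A_{kj} = C(k,j) μ'_{k-j}` is lower unitriangular (`μ'` the moments of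
`κ_{t-s}`) and `H_{jl} = μ_{j+l}` is the Hankel matrix of the moments
`μ_m = Γ(a+m+1)/Γ(a+1)` of `w_{a,1}`, `a = N(s-1)`. Since `μ_{j+l} = μ_j · (a+j+1)^{(l)}` with
`(·)^{(l)}` the rising factorial, a monic polynomial of degree `l`, `det H` is `∏ μ_j` times
the Vandermonde determinant of the nodes `a+1, …, a+n+1`, which is `∏_{j ≤ n} j!`.
-/

open Real Set Polynomial

noncomputable def gammaMoment (a : ℝ) (m : ℕ) : ℝ :=
  Gamma (a + m + 1) / Gamma (a + 1)

noncomputable def momentMatrix (a a' : ℝ) (n : ℕ) : Matrix (Fin (n + 1)) (Fin (n + 1)) ℝ :=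
  Matrix.of fun k l =>
    ∫ y : ℝ, ∫ x : ℝ, y ^ (k : ℕ) * w a' 1 (y - x) * x ^ (l : ℕ) * w a 1 x

noncomputable def binomialMomentMatrix (a : ℝ) (n : ℕ) :
    Matrix (Fin (n + 1)) (Fin (n + 1)) ℝ :=
  Matrix.of fun k j => ((k : ℕ).choose j : ℝ) * gammaMoment a (k - j)

noncomputable def gammaHankelMatrix (a : ℝ) (n : ℕ) : Matrix (Fin (n + 1)) (Fin (n + 1)) ℝ :=
  Matrix.of fun j l => gammaMoment a (j + l)

theorem Gamma_add_nat_eq_mul_ascPochhammer {x : ℝ} (hx : 0 < x) (l : ℕ) :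
    Gamma (x + l) = Gamma x * (ascPochhammer ℝ l).eval x := by
  induction l with
  | zero => simp
  | succ l ih =>
    rw [Nat.cast_succ, ← add_assoc, Gamma_add_one (by positivity), ih, ascPochhammer_succ_eval]
    ring

section GammaWeight

variable {a : ℝ}

-- The exponent is written as in the integrand of `GammaIntegral (a + m + 1)`.
theorem pow_mul_w_one_eq_indicator (m : ℕ) :
    (fun x : ℝ => x ^ m * w a 1 x)
      = (Ioi 0).indicator fun x => (Gamma (a + 1))⁻¹ * (exp (-x) * x ^ (a + m + 1 - 1)) := by
  funext x
  by_cases hx : 0 < x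
  · rw [w, if_pos hx, indicator_of_mem (mem_Ioi.mpr hx), one_rpow, one_mul,
      show a + (m : ℝ) + 1 - 1 = m + a by ring, rpow_add hx, rpow_natCast]
    ring
  · rw [w, if_neg hx, indicator_of_notMem (by simpa using hx), mul_zero]

theorem integrable_pow_mul_w_one (ha : -1 < a) (m : ℕ) :
    Integrable fun x : ℝ => x ^ m * w a 1 x := by
  rw [pow_mul_w_one_eq_indicator, integrable_indicator_iff measurableSet_Ioi]
  exact (GammaIntegral_convergent (by linarith [m.cast_nonneg (α := ℝ)])).const_mul _

theorem integral_pow_mul_w_one (ha : -1 < a) (m : ℕ) :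
    ∫ x : ℝ, x ^ m * w a 1 x = gammaMoment a m := by
  rw [pow_mul_w_one_eq_indicator, integral_indicator measurableSet_Ioi, integral_const_mul,
    ← Gamma_eq_integral (by linarith [m.cast_nonneg (α := ℝ)]), inv_mul_eq_div, gammaMoment]

theorem gammaMoment_zero (ha : -1 < a) : gammaMoment a 0 = 1 := by
  rw [gammaMoment, Nat.cast_zero, add_zero, div_self (Gamma_pos_of_pos (by linarith)).ne']

theorem gammaMoment_add (ha : -1 < a) (i j : ℕ) :
    gammaMoment a (i + j) = gammaMoment a i * (ascPochhammer ℝ j).eval (a + i + 1) := by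
  rw [gammaMoment, gammaMoment,
    show a + ((i + j : ℕ) : ℝ) + 1 = a + i + 1 + j by push_cast; ring,
    Gamma_add_nat_eq_mul_ascPochhammer (by linarith [i.cast_nonneg (α := ℝ)])]
  ring

theorem integral_pow_mul_w_one_sub (ha : -1 < a) (k : ℕ) (x : ℝ) :
    ∫ y : ℝ, y ^ k * w a 1 (y - x)
      = ∑ j ∈ Finset.range (k + 1), (k.choose j : ℝ) * gammaMoment a (k - j) * x ^ j := by
  have hexpand : (fun u : ℝ => (u + x) ^ k * w a 1 u) = fun u =>
      ∑ j ∈ Finset.range (k + 1), ((k.choose j : ℝ) * x ^ j) * (u ^ (k - j) * w a 1 u) := by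
    funext u
    rw [add_comm u x, add_pow, Finset.sum_mul]
    exact Finset.sum_congr rfl fun j _ => by ring
  calc ∫ y : ℝ, y ^ k * w a 1 (y - x)
      = ∫ u : ℝ, (u + x) ^ k * w a 1 u := by
        simpa using integral_sub_right_eq_self (fun u : ℝ => (u + x) ^ k * w a 1 u) x
    _ = _ := by
        rw [hexpand, integral_finsetSum _ fun j _ => (integrable_pow_mul_w_one ha _).const_mul _]
        refine Finset.sum_congr rfl fun j _ => ?_
        rw [integral_const_mul, integral_pow_mul_w_one ha]
        ring

end GammaWeight

section MomentMatrix

variable {a a' : ℝ}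

theorem integrable_uncurry_moment (ha : -1 < a) (ha' : -1 < a') (k l : ℕ) :
    Integrable (Function.uncurry fun y x : ℝ => y ^ k * w a' 1 (y - x) * x ^ l * w a 1 x)
      (volume.prod volume) := by
  set G : ℝ × ℝ → ℝ := fun q => ∑ j ∈ Finset.range (k + 1),
    (k.choose j : ℝ) * ((q.1 ^ (k - j) * w a' 1 q.1) * (q.2 ^ (j + l) * w a 1 q.2))
  have hG : Integrable G (volume.prod volume) :=
    integrable_finsetSum _ fun j _ =>
      ((integrable_pow_mul_w_one ha' _).mul_prod (integrable_pow_mul_w_one ha _)).const_mul _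
  have hshear : Function.uncurry (fun y x : ℝ => y ^ k * w a' 1 (y - x) * x ^ l * w a 1 x)
      = G ∘ fun p : ℝ × ℝ => (p.1 - p.2, p.2) := by
    funext ⟨y, x⟩
    simp only [Function.uncurry_apply_pair, Function.comp_apply, G]
    conv_lhs => rw [show y = x + (y - x) by ring, add_pow]
    rw [add_sub_cancel_left, Finset.sum_mul, Finset.sum_mul, Finset.sum_mul]
    refine Finset.sum_congr rfl fun j _ => ?_
    rw [pow_add]
    ring
  rw [hshear]
  exact ((measurePreserving_sub_prod volume volume).integrable_comp
    hG.aestronglyMeasurable).mpr hG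

theorem integral_integral_moment (ha : -1 < a) (ha' : -1 < a') (k l : ℕ) :
    ∫ y : ℝ, ∫ x : ℝ, y ^ k * w a' 1 (y - x) * x ^ l * w a 1 x
      = ∑ j ∈ Finset.range (k + 1),
          (k.choose j : ℝ) * gammaMoment a' (k - j) * gammaMoment a (j + l) := by
  have hexpand : ∀ x : ℝ, (∫ y : ℝ, y ^ k * w a' 1 (y - x)) * x ^ l * w a 1 x
      = ∑ j ∈ Finset.range (k + 1),
          (k.choose j : ℝ) * gammaMoment a' (k - j) * (x ^ (j + l) * w a 1 x) := by
    intro x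
    rw [integral_pow_mul_w_one_sub ha', Finset.sum_mul, Finset.sum_mul]
    refine Finset.sum_congr rfl fun j _ => ?_
    rw [pow_add]
    ring
  rw [integral_integral_swap (integrable_uncurry_moment ha ha' k l)]
  simp_rw [integral_mul_const, hexpand]
  rw [integral_finsetSum _ fun j _ => (integrable_pow_mul_w_one ha _).const_mul _]
  simp_rw [integral_const_mul, integral_pow_mul_w_one ha]

theorem momentMatrix_eq_mul (ha : -1 < a) (ha' : -1 < a') (n : ℕ) :
    momentMatrix a a' n = binomialMomentMatrix a' n * gammaHankelMatrix a n := by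
  ext k l
  rw [momentMatrix, Matrix.of_apply, integral_integral_moment ha ha', Matrix.mul_apply]
  simp only [binomialMomentMatrix, gammaHankelMatrix, Matrix.of_apply]
  rw [Fin.sum_univ_eq_sum_range (fun j => ((k : ℕ).choose j : ℝ) * gammaMoment a' (k - j)
      * gammaMoment a (j + l)) (n + 1)]
  refine Finset.sum_subset (Finset.range_subset_range.mpr (by omega)) fun j _ hj => ?_
  rw [Nat.choose_eq_zero_of_lt (by simpa using hj), Nat.cast_zero, zero_mul, zero_mul]

theorem det_binomialMomentMatrix (ha : -1 < a) (n : ℕ) : (binomialMomentMatrix a n).det = 1 := by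
  rw [Matrix.det_of_isLowerTriangular _ fun k j hkj => by
    rw [binomialMomentMatrix, Matrix.of_apply,
      Nat.choose_eq_zero_of_lt (show (k : ℕ) < j from hkj), Nat.cast_zero, zero_mul]]
  refine Finset.prod_eq_one fun k _ => ?_
  rw [binomialMomentMatrix, Matrix.of_apply, Nat.choose_self, Nat.sub_self, gammaMoment_zero ha,
    Nat.cast_one, one_mul]

theorem det_gammaHankelMatrix (ha : -1 < a) (n : ℕ) :
    (gammaHankelMatrix a n).det = (∏ j : Fin (n + 1), gammaMoment a j) * n.superFactorial := by
  have hfactor : gammaHankelMatrix a n = Matrix.diagonal (fun j : Fin (n + 1) => gammaMoment a j)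
      * Matrix.of fun j l : Fin (n + 1) => (ascPochhammer ℝ l).eval (a + j + 1) := by
    ext j l
    rw [Matrix.diagonal_mul, gammaHankelMatrix, Matrix.of_apply, Matrix.of_apply,
      gammaMoment_add ha]
  have hnodes :
      (fun j : Fin (n + 1) => a + j + 1) = fun j : Fin (n + 1) => ((j : ℕ) : ℝ) + (a + 1) := by
    funext j; ring
  rw [hfactor, Matrix.det_mul, Matrix.det_diagonal,
    ← Matrix.det_eval_matrixOfPolynomials_eq_det_vandermonde _ _
      (fun l => ascPochhammer_natDegree ℝ l) (fun l => monic_ascPochhammer ℝ l),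
    hnodes, Matrix.det_vandermonde_add, Matrix.det_vandermonde_id_eq_superFactorial]

theorem det_momentMatrix (ha : -1 < a) (ha' : -1 < a') (n : ℕ) :
    (momentMatrix a a' n).det
      = ∏ k ∈ Finset.range (n + 1),
          Gamma (a + k + 1) * Gamma ((k : ℝ) + 1) / Gamma (a + 1) := by
  rw [momentMatrix_eq_mul ha ha', Matrix.det_mul, det_binomialMomentMatrix ha', one_mul,
    det_gammaHankelMatrix ha, Fin.prod_univ_eq_prod_range (fun k => gammaMoment a k),
    ← Nat.prod_range_succ_factorial, Nat.cast_prod, ← Finset.prod_mul_distrib]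
  refine Finset.prod_congr rfl fun k _ => ?_
  rw [gammaMoment, ← Gamma_nat_eq_factorial]
  ring

end MomentMatrix

/-- The moment determinant `D_n^{(t,s)} = det_{0≤k,ℓ≤n}(M_{k,ℓ}^{(t,s)})` equals
`∏_{k=0}^n Γ(N(s-1)+k+1)Γ(k+1)/Γ(N(s-1)+1)`; in particular it is positive. -/
theorem lup_moment_det (N : ℕ) (hN : 0 < N) (t s : ℕ) (hs : 0 < s) (hst : s < t) (n : ℕ) :
    (Matrix.of fun k l : Fin (n + 1) =>
        ∫ y : ℝ, ∫ x : ℝ,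
          y ^ (k : ℕ) * kappa N ((t : ℝ) - s) (y - x) * x ^ (l : ℕ)
            * w ((N : ℝ) * ((s : ℝ) - 1)) 1 x).det
      = ∏ k ∈ Finset.range (n + 1),
          Real.Gamma ((N : ℝ) * ((s : ℝ) - 1) + k + 1) * Real.Gamma ((k : ℝ) + 1)
            / Real.Gamma ((N : ℝ) * ((s : ℝ) - 1) + 1) ∧
    0 < (Matrix.of fun k l : Fin (n + 1) =>
        ∫ y : ℝ, ∫ x : ℝ,
          y ^ (k : ℕ) * kappa N ((t : ℝ) - s) (y - x) * x ^ (l : ℕ)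
            * w ((N : ℝ) * ((s : ℝ) - 1)) 1 x).det := by
  have ha : -1 < (N : ℝ) * ((s : ℝ) - 1) := by
    have : (1 : ℝ) ≤ s := by exact_mod_cast hs
    nlinarith [N.cast_nonneg (α := ℝ)]
  have ha' : -1 < (N : ℝ) * ((t : ℝ) - s) - 1 := by
    have : (1 : ℝ) ≤ N := by exact_mod_cast hN
    have : (1 : ℝ) ≤ t - s := by
      rw [le_sub_iff_add_le']; exact_mod_cast hst
    nlinarith
  have hdet := det_momentMatrix ha ha' n
  refine ⟨hdet, hdet ▸ Finset.prod_pos fun k _ => ?_⟩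
  have hk : (0 : ℝ) ≤ k := k.cast_nonneg
  exact div_pos (mul_pos (Gamma_pos_of_pos (by linarith)) (Gamma_pos_of_pos (by linarith)))
    (Gamma_pos_of_pos (by linarith))
end

section
/- Let k ≥ 0 be a fixed integer and b ∈ ℝ a fixed constant. Then lim_{a→∞} (2a)^{−k/2} · L̃_k^{a+b}( √(2a) x + a ) = H̃_k(x) for every real x, where L̃_k^{a+b} is the monic Laguerre polynomial of degree k with index a+b and H̃_k is the monic Hermite polynomial of degree k. -/
/-!
Write `s = √(2a)`, so that `a = s²/2`. The monic Laguerre polynomials satisfy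
`L̃_{n+1}^c(y) = y L̃_n^{c+1}(y) - (n+c+1) L̃_n^c(y)` and
`L̃_{n+1}^c = L̃_{n+1}^{c+1} + (n+1) L̃_n^{c+1}`, which combine into a three-term recurrence
involving only the index `c+1`. With `c = s²/2 + b` and `y = s x + s²/2`, the rescaled
polynomials `s^{-n} L̃_n` then satisfy a recurrence whose coefficients tend, as `s → ∞`, to those
of `H̃_{n+2} = x H̃_{n+1} - (n+1)/2 H̃_n`; induction on `n`, shifting `b` to `b + 1` at each step,
gives the limit.
-/

/-- The monic Laguerre polynomial with index `a`:
`L̃_n^a(x) = Σ_{k=0}^n (-1)^{n-k} (n!/(n-k)!) (Γ(a+n+1)/Γ(a+k+1)) x^k/k!`. -/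
noncomputable def Lag (a : ℝ) (n : ℕ) (x : ℝ) : ℝ :=
  ∑ k ∈ Finset.range (n + 1),
    (-1 : ℝ) ^ (n - k) * ((n.factorial : ℝ) / ((n - k).factorial : ℝ))
      * (Real.Gamma (a + n + 1) / Real.Gamma (a + k + 1)) * x ^ k / (k.factorial : ℝ)

/-- The monic Hermite polynomial
`H̃_k(x) = Σ_{j=0}^{⌊k/2⌋} (-1)^j (k!/(j!(k-2j)!)) x^{k-2j}/2^{2j}`. -/
noncomputable def Herm (k : ℕ) (x : ℝ) : ℝ :=
  ∑ j ∈ Finset.range (k / 2 + 1),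
    (-1 : ℝ) ^ j * ((k.factorial : ℝ) / ((j.factorial : ℝ) * ((k - 2 * j).factorial : ℝ)))
      * x ^ (k - 2 * j) / 2 ^ (2 * j)

open Finset Filter Topology

/-- `Lag` with `Γ(c+n+1)/Γ(c+k+1)` expanded as the rising product `(c+k+1)⋯(c+n)`, which makes
sense for every real `c`; the sign `(-1)^(n+k)` avoids truncated subtraction. -/
noncomputable def monicLaguerre (c : ℝ) (n : ℕ) (x : ℝ) : ℝ :=
  ∑ k ∈ range (n + 1), (-1) ^ (n + k) * (n.choose k : ℝ) * (∏ i ∈ Ico k n, (c + 1 + i)) * x ^ k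

theorem Real.Gamma_add_nat_eq_mul_prod_Ico {c : ℝ} (hc : -1 < c) {k n : ℕ} (hkn : k ≤ n) :
    Real.Gamma (c + n + 1) = Real.Gamma (c + k + 1) * ∏ i ∈ Ico k n, (c + 1 + i) := by
  induction n, hkn using Nat.le_induction with
  | base => simp
  | succ n hkn ih =>
    have hpos : c + n + 1 ≠ 0 := by linarith [n.cast_nonneg (α := ℝ)]
    rw [(by push_cast; ring : c + (n + 1 : ℕ) + 1 = c + n + 1 + 1), Real.Gamma_add_one hpos, ih,
      prod_Ico_succ_top hkn]
    ring

theorem Lag_eq_monicLaguerre {c : ℝ} (hc : -1 < c) (n : ℕ) (x : ℝ) :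
    Lag c n x = monicLaguerre c n x := by
  refine sum_congr rfl fun k hk => ?_
  have hkn : k ≤ n := Nat.lt_succ_iff.mp (mem_range.mp hk)
  have hΓ : Real.Gamma (c + k + 1) ≠ 0 :=
    (Real.Gamma_pos_of_pos (by linarith [k.cast_nonneg (α := ℝ)])).ne'
  rw [Real.Gamma_add_nat_eq_mul_prod_Ico hc hkn, mul_div_cancel_left₀ _ hΓ,
    ← Nat.choose_mul_factorial_mul_factorial hkn, (by omega : n + k = n - k + 2 * k), pow_add,
    pow_mul, neg_one_sq, one_pow, mul_one]
  push_cast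
  field_simp

theorem choose_mul_prod_Ico_succ_top {R : Type*} [CommSemiring R] (n k : ℕ) (f : ℕ → R) :
    (n.choose k : R) * ∏ i ∈ Ico k (n + 1), f i = n.choose k * (∏ i ∈ Ico k n, f i) * f n := by
  rcases le_or_gt k n with hkn | hnk
  · rw [prod_Ico_succ_top hkn, mul_assoc]
  · simp [Nat.choose_eq_zero_of_lt hnk]

theorem monicLaguerre_succ (c : ℝ) (n : ℕ) (x : ℝ) :
    monicLaguerre c (n + 1) x =
      x * monicLaguerre (c + 1) n x - (n + c + 1) * monicLaguerre c n x := by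
  have hpad : monicLaguerre c n x = ∑ k ∈ range (n + 2),
      (-1) ^ (n + k) * (n.choose k : ℝ) * (∏ i ∈ Ico k n, (c + 1 + i)) * x ^ k := by
    rw [sum_range_succ _ (n + 1), Nat.choose_succ_self, Nat.cast_zero, mul_zero, zero_mul, zero_mul,
      add_zero, monicLaguerre]
  have hcoeff : ∀ k ∈ range (n + 1),
      (-1) ^ (n + 1 + (k + 1)) * ((n + 1).choose (k + 1) : ℝ)
        * (∏ i ∈ Ico (k + 1) (n + 1), (c + 1 + i)) * x ^ (k + 1) =
      x * ((-1) ^ (n + k) * (n.choose k : ℝ) * (∏ i ∈ Ico k n, (c + 1 + 1 + i)) * x ^ k)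
        - (n + c + 1) * ((-1) ^ (n + (k + 1)) * (n.choose (k + 1) : ℝ)
          * (∏ i ∈ Ico (k + 1) n, (c + 1 + i)) * x ^ (k + 1)) := by
    intro k _
    have hshift : ∏ i ∈ Ico k n, (c + 1 + 1 + i) = ∏ i ∈ Ico (k + 1) (n + 1), (c + 1 + i) := by
      rw [← prod_Ico_add' _ k n 1]
      exact prod_congr rfl fun i _ => by push_cast; ring
    have htop := choose_mul_prod_Ico_succ_top n (k + 1) (fun i : ℕ => c + 1 + (i : ℝ))
    rw [hshift, Nat.choose_succ_succ', Nat.cast_add]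
    linear_combination (-1) ^ (n + k) * x ^ (k + 1) * htop
  rw [hpad, monicLaguerre, monicLaguerre, sum_range_succ', sum_range_succ' _ (n + 1), mul_add,
    mul_sum, mul_sum, sum_congr rfl hcoeff, sum_sub_distrib]
  simp only [prod_Ico_succ_top (Nat.zero_le n), Nat.choose_zero_right]
  ring

@[simp]
theorem monicLaguerre_zero (c x : ℝ) : monicLaguerre c 0 x = 1 := by
  simp [monicLaguerre]

theorem monicLaguerre_one (c x : ℝ) : monicLaguerre c 1 x = x - (c + 1) := by
  rw [monicLaguerre_succ, monicLaguerre_zero, monicLaguerre_zero]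
  push_cast
  ring

theorem monicLaguerre_succ_eq_add (c : ℝ) (n : ℕ) (x : ℝ) :
    monicLaguerre c (n + 1) x =
      monicLaguerre (c + 1) (n + 1) x + (n + 1) * monicLaguerre (c + 1) n x := by
  induction n generalizing c with
  | zero =>
    simp only [Nat.zero_add, Nat.cast_zero, monicLaguerre_one, monicLaguerre_zero]
    ring
  | succ n ih =>
    have h1 := monicLaguerre_succ c (n + 1) x
    have h2 := monicLaguerre_succ (c + 1) (n + 1) x
    have h3 := monicLaguerre_succ (c + 1) n x
    push_cast at h1 h2 ⊢
    linear_combination h1 - h2 - (n + c + 2) * ih c + x * ih (c + 1) - (n + 1) * h3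

theorem monicLaguerre_add_two (c : ℝ) (n : ℕ) (x : ℝ) :
    monicLaguerre c (n + 2) x = (x - (n + c + 2)) * monicLaguerre (c + 1) (n + 1) x
      - (n + 1) * (n + c + 2) * monicLaguerre (c + 1) n x := by
  have h := monicLaguerre_succ c (n + 1) x
  push_cast at h
  linear_combination h - (n + c + 2) * monicLaguerre_succ_eq_add c n x

theorem Herm_eq_sum_descFactorial (n : ℕ) (x : ℝ) {N : ℕ} (hN : n / 2 + 1 ≤ N) :
    Herm n x = ∑ j ∈ range N,
      (-1) ^ j * ((n.descFactorial (2 * j) : ℝ) / j.factorial) * x ^ (n - 2 * j) / 2 ^ (2 * j) := by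
  rw [Herm, ← sum_subset (range_subset_range.2 hN)]
  · refine sum_congr rfl fun j hj => ?_
    have h2j : 2 * j ≤ n := by have := mem_range.mp hj; omega
    rw [← Nat.factorial_mul_descFactorial h2j]
    push_cast
    field_simp
  · intro j _ hj
    have hlt : n < 2 * j := by have := mem_range.not.mp hj; omega
    simp [Nat.descFactorial_eq_zero_iff_lt.mpr hlt]

theorem Herm_add_two (n : ℕ) (x : ℝ) :
    Herm (n + 2) x = x * Herm (n + 1) x - (n + 1) / 2 * Herm n x := by
  -- termwise this is `(n+2)↓(2j+2) = (n+1)↓(2j+2) + 2(j+1)(n+1) · n↓(2j)` for descFactorials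
  have hterm : ∀ j ∈ range (n / 2 + 1),
      (-1) ^ (j + 1) * (((n + 2).descFactorial (2 * (j + 1)) : ℝ) / (j + 1).factorial)
        * x ^ (n + 2 - 2 * (j + 1)) / 2 ^ (2 * (j + 1)) =
      x * ((-1) ^ (j + 1) * (((n + 1).descFactorial (2 * (j + 1)) : ℝ) / (j + 1).factorial)
        * x ^ (n + 1 - 2 * (j + 1)) / 2 ^ (2 * (j + 1)))
      - (n + 1) / 2 * ((-1) ^ j * ((n.descFactorial (2 * j) : ℝ) / j.factorial)
        * x ^ (n - 2 * j) / 2 ^ (2 * j)) := by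
    intro j hj
    obtain ⟨m, rfl⟩ : ∃ m, n = 2 * j + m := ⟨n - 2 * j, by have := mem_range.mp hj; omega⟩
    have hpow : (m : ℝ) * (x * x ^ (m - 1)) = m * x ^ m := by
      rcases m with _ | m
      · simp
      · simp [pow_succ']
    have e2 : 2 * j + m + 2 - 2 * (j + 1) = m := by omega
    have e1 : 2 * j + m + 1 - 2 * (j + 1) = m - 1 := by omega
    have e0 : 2 * j + m - 2 * j = m := by omega
    rw [e2, e1, e0, (by ring : 2 * (j + 1) = 2 * j + 1 + 1), Nat.succ_descFactorial_succ,
      Nat.succ_descFactorial_succ, Nat.succ_descFactorial_succ, Nat.descFactorial_succ, e0,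
      Nat.factorial_succ]
    push_cast
    field_simp
    linear_combination (-1) ^ j * 2 ^ (2 * j + 1) * hpow
  rw [Herm_eq_sum_descFactorial (n + 2) x (N := n / 2 + 2) (by omega),
    Herm_eq_sum_descFactorial (n + 1) x (N := n / 2 + 2) (by omega),
    Herm_eq_sum_descFactorial n x le_rfl, sum_range_succ', sum_range_succ' _ (n / 2 + 1), mul_add,
    mul_sum, mul_sum, sum_congr rfl hterm, sum_sub_distrib]
  simp only [mul_zero, pow_zero, Nat.descFactorial_zero, Nat.factorial_zero, Nat.sub_zero]
  ring

theorem tendsto_monicLaguerre_scaled (k : ℕ) (b x : ℝ) :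
    Tendsto (fun s : ℝ => (s ^ k)⁻¹ * monicLaguerre (s ^ 2 / 2 + b) k (s * x + s ^ 2 / 2)) atTop
      (𝓝 (Herm k x)) := by
  have hinv : Tendsto (fun s : ℝ => s⁻¹) atTop (𝓝 0) := tendsto_inv_atTop_zero
  induction k using Nat.twoStepInduction generalizing b with
  | zero => simp [Herm]
  | one =>
    have hlim : Tendsto (fun s : ℝ => x - (b + 1) * s⁻¹) atTop (𝓝 (Herm 1 x)) := by
      simpa [Herm] using tendsto_const_nhds.sub (hinv.const_mul (b + 1))
    refine hlim.congr' ?_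
    filter_upwards [eventually_ne_atTop 0] with s hs
    rw [monicLaguerre_one]
    field_simp
    ring
  | more n ih ih' =>
    have hlim :=
      (((tendsto_const_nhds (x := x)).sub (hinv.const_mul (n + b + 2))).mul (ih' (b + 1))).sub
        ((((hinv.pow 2).const_mul (n + b + 2)).add_const (1 / 2)).const_mul ((n : ℝ) + 1) |>.mul
          (ih (b + 1)))
    rw [Herm_add_two]
    convert hlim.congr' ?_ using 2
    · ring
    filter_upwards [eventually_ne_atTop 0] with s hs
    rw [monicLaguerre_add_two, add_assoc _ b 1]
    field_simp
    ring

/-- Asymptotics of Laguerre polynomials: for fixed `k` and `b`,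
`(2a)^{-k/2} L̃_k^{a+b}(√(2a) x + a) → H̃_k(x)` as `a → ∞`. -/
theorem laguerre_to_hermite (k : ℕ) (b : ℝ) (x : ℝ) :
    Filter.Tendsto
      (fun a : ℝ => ((2 * a) ^ ((k : ℝ) / 2))⁻¹ * Lag (a + b) k (Real.sqrt (2 * a) * x + a))
      Filter.atTop (nhds (Herm k x)) := by
  have hsqrt : Tendsto (fun a : ℝ => √(2 * a)) atTop atTop :=
    Real.tendsto_sqrt_atTop.comp (tendsto_id.const_mul_atTop two_pos)
  refine ((tendsto_monicLaguerre_scaled k b x).comp hsqrt).congr' ?_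
  filter_upwards [eventually_ge_atTop 0, eventually_gt_atTop (-1 - b)] with a ha hab
  have hsq : √(2 * a) ^ 2 / 2 = a := by rw [Real.sq_sqrt (by positivity)]; ring
  rw [Function.comp_apply, hsq, Real.rpow_div_two_eq_sqrt _ (by positivity), Real.rpow_natCast,
    Lag_eq_monicLaguerre (by linarith)]
end

section
/- Let 0 < t < s be reals and x, y ∈ ℝ. Then (1/√(2s)) Σ_{k=0}^{∞} (t/s)^{k/2} [H̃_k(y/√(2t)) H̃_k(x/√(2s)) / m_k] e^{−x²/(2s)} = e^{−(y−x)²/(2(s−t))}/√(2π(s−t)), with the series converging absolutely; equivalently, (1/√(2s)) Σ_{k=0}^{∞} (t/s)^{k/2} H̃_k(y/√(2t)) H̃_k(x/√(2s)) / m_k = e^{−(y−x)²/(2(s−t))}/√(2π(s−t)) · e^{x²/(2s)}. -/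
/-- `m_k = √π k!/2^k`, the squared norm of `H̃_k` with respect to `e^{-x²}`. -/
noncomputable def mconst (k : ℕ) : ℝ :=
  Real.sqrt Real.pi * (k.factorial : ℝ) / 2 ^ k

open MeasureTheory Real Set Filter
open scoped Nat

-- x^k ≤ C exp(c x²) for x ≥ 0
lemma pow_le_exp_sq (k : ℕ) {c : ℝ} (hc : 0 < c) :
    ∃ C : ℝ, 0 < C ∧ ∀ x : ℝ, 0 ≤ x → x ^ k ≤ C * Real.exp (c * x ^ 2) := by
  refine ⟨1 + k ! / c ^ k, by positivity, fun x hx => ?_⟩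
  have hexp : (c * x ^ 2) ^ k / (k ! : ℝ) ≤ Real.exp (c * x ^ 2) := by
    have := Real.sum_le_exp_of_nonneg (by positivity : (0:ℝ) ≤ c * x ^ 2) (k + 1)
    refine le_trans ?_ this
    exact Finset.single_le_sum (f := fun i => (c * x ^ 2) ^ i / (i ! : ℝ))
      (fun i _ => by positivity) (Finset.self_mem_range_succ k)
  have hx2 : (x ^ 2) ^ k ≤ (k ! / c ^ k) * Real.exp (c * x ^ 2) := by
    have hk : (0:ℝ) < c ^ k := by positivity
    have hkf : (0:ℝ) < (k ! : ℝ) := by positivity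
    rw [div_le_iff₀ hkf, mul_pow] at hexp
    rw [div_mul_eq_mul_div, le_div_iff₀ hk]
    nlinarith [hexp]
  have h1 : (1:ℝ) ≤ Real.exp (c * x ^ 2) := by
    rw [Real.one_le_exp_iff]; positivity
  rcases le_or_gt x 1 with h | h
  · calc x ^ k ≤ 1 := pow_le_one₀ hx h
    _ ≤ (1 + k ! / c ^ k) * Real.exp (c * x ^ 2) := by nlinarith [hx2, Real.exp_pos (c * x^2), (by positivity : (0:ℝ) ≤ k ! / c ^ k)]
  · have : x ^ k ≤ (x ^ 2) ^ k := by
      rw [← pow_mul]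
      exact pow_le_pow_right₀ h.le (by omega)
    calc x ^ k ≤ (x^2)^k := this
    _ ≤ (k ! / c ^ k) * Real.exp (c * x ^ 2) := hx2
    _ ≤ (1 + k ! / c ^ k) * Real.exp (c * x ^ 2) := by nlinarith [Real.exp_pos (c*x^2)]

lemma integrable_pow_exp (n : ℕ) : Integrable (fun x : ℝ => x ^ n * Real.exp (-x ^ 2)) := by
  obtain ⟨C, hC, hbound⟩ := pow_le_exp_sq n (by norm_num : (0:ℝ) < 1/2)
  have hint : Integrable (fun x : ℝ => C * Real.exp (-(1/2) * x ^ 2)) :=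
    (integrable_exp_neg_mul_sq (by norm_num)).const_mul C
  refine hint.mono' ?_ ?_
  · exact (continuous_pow n |>.mul (Real.continuous_exp.comp (continuous_pow 2).neg)).aestronglyMeasurable
  · filter_upwards with x
    have h1 : |x| ^ n ≤ C * Real.exp ((1/2) * x ^ 2) := by
      have := hbound |x| (abs_nonneg x); simpa [sq_abs] using this
    have : ‖x ^ n * Real.exp (-x ^ 2)‖ = |x| ^ n * Real.exp (-x ^ 2) := by
      rw [norm_mul, norm_pow, Real.norm_eq_abs, Real.norm_eq_abs, abs_of_pos (Real.exp_pos _)]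
    rw [this]
    calc |x| ^ n * Real.exp (-x ^ 2) ≤ (C * Real.exp ((1/2) * x ^2)) * Real.exp (-x ^ 2) := by
          exact mul_le_mul_of_nonneg_right h1 (Real.exp_pos _).le
    _ = C * Real.exp (-(1/2) * x ^ 2) := by rw [mul_assoc, ← Real.exp_add]; ring_nf

lemma moment_odd {m : ℕ} (hm : ¬ Even m) : ∫ u : ℝ, u ^ m * Real.exp (-u ^ 2) = 0 := by
  have hodd : Odd m := Nat.not_even_iff_odd.mp hm
  have := MeasureTheory.integral_neg_eq_self (fun u : ℝ => u ^ m * Real.exp (-u ^ 2)) volume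
  simp only [hodd.neg_pow, neg_sq, neg_mul] at this
  rw [MeasureTheory.integral_neg] at this
  linarith

lemma moment_Ioi (j : ℕ) : ∫ u in Ioi (0:ℝ), u ^ (2*j) * Real.exp (-u ^ 2)
    = Real.sqrt π * (2*j)! / (4 ^ j * j !) / 2 := by
  induction j with
  | zero =>
    simpa using integral_gaussian_Ioi 1
  | succ n ih =>
    have hIO : ∀ m : ℕ, IntegrableOn (fun u : ℝ => u ^ m * Real.exp (-u ^ 2)) (Ioi 0) :=
      fun m => (integrable_pow_exp m).integrableOn
    -- integration by parts via FTC on Ioi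
    have key : ∫ u in Ioi (0:ℝ),
        ((2*n+1 : ℝ) * u ^ (2*n) * Real.exp (-u^2) - 2 * (u ^ (2*(n+1)) * Real.exp (-u^2))) = 0 := by
      have hderiv : ∀ x ∈ Ioi (0:ℝ), HasDerivAt (fun u : ℝ => u ^ (2*n+1) * Real.exp (-u^2))
          ((2*n+1 : ℝ) * x ^ (2*n) * Real.exp (-x^2) - 2 * (x ^ (2*(n+1)) * Real.exp (-x^2))) x := by
        intro x _
        have h1 : HasDerivAt (fun u : ℝ => u ^ (2*n+1)) ((2*n+1 : ℝ) * x ^ (2*n)) x := by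
          simpa using hasDerivAt_pow (2*n+1) x
        have h2 : HasDerivAt (fun u : ℝ => Real.exp (-u^2)) (Real.exp (-x^2) * (-(2*x))) x := by
          have : HasDerivAt (fun u : ℝ => -u^2) (-(2*x)) x := by
            simpa using (hasDerivAt_pow 2 x).fun_neg
          exact (Real.hasDerivAt_exp _).comp x this
        have := h1.fun_mul h2
        refine this.congr_deriv ?_
        ring
      have hf'int : IntegrableOn (fun x : ℝ =>
          (2*n+1 : ℝ) * x ^ (2*n) * Real.exp (-x^2) - 2 * (x ^ (2*(n+1)) * Real.exp (-x^2))) (Ioi 0) := by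
        apply Integrable.sub
        · simpa [mul_assoc] using ((hIO (2*n)).const_mul (2*n+1 : ℝ))
        · exact (hIO (2*(n+1))).const_mul 2
      have htop : Tendsto (fun u : ℝ => u ^ (2*n+1) * Real.exp (-u^2)) atTop (nhds 0) := by
        have hlo := rpow_mul_exp_neg_mul_sq_isLittleO_exp_neg (by norm_num : (0:ℝ) < 1) (2*n+1 : ℕ)
        have heq : (fun x : ℝ => x ^ ((2*n+1 : ℕ) : ℝ) * Real.exp (-1 * x ^ 2)) =ᶠ[atTop]
            (fun u : ℝ => u ^ (2*n+1) * Real.exp (-u^2)) := by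
          filter_upwards [eventually_ge_atTop (0:ℝ)] with x hx
          rw [Real.rpow_natCast]
          ring_nf
        have hmul : Tendsto (fun x : ℝ => (1/2 : ℝ) * x) atTop atTop :=
          Tendsto.const_mul_atTop (by norm_num) tendsto_id
        have hneg : Tendsto (fun x : ℝ => -((1/2 : ℝ) * x)) atTop atBot :=
          tendsto_neg_atTop_atBot.comp hmul
        have hexp0 : Tendsto (fun x : ℝ => Real.exp (-(1/2) * x)) atTop (nhds 0) := by
          have h2 := Real.tendsto_exp_atBot.comp hneg
          have : (Real.exp ∘ fun x : ℝ => -((1/2 : ℝ) * x)) = fun x : ℝ => Real.exp (-(1/2) * x) := by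
            funext x; simp [Function.comp, neg_mul]
          rwa [this] at h2
        exact (hlo.congr' heq (EventuallyEq.refl _ _)).isBigO.trans_tendsto hexp0
      have := integral_Ioi_of_hasDerivAt_of_tendsto
        (f := fun u : ℝ => u ^ (2*n+1) * Real.exp (-u^2)) ?_ hderiv hf'int htop
      · simpa using this
      · exact ((continuous_pow _).mul (Real.continuous_exp.comp (continuous_pow 2).neg)).continuousWithinAt
    simp only [mul_assoc] at key
    rw [integral_sub (((hIO (2*n)).const_mul (2*n+1:ℝ))) ((hIO (2*(n+1))).const_mul 2),
      integral_const_mul, integral_const_mul] at key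
    have h1 : ∫ u in Ioi (0:ℝ), u ^ (2*(n+1)) * Real.exp (-u^2)
        = ((2*(n:ℝ)+1)/2) * ∫ u in Ioi (0:ℝ), u^(2*n) * Real.exp (-u^2) := by
      have h2 : (2:ℝ) ≠ 0 := two_ne_zero
      field_simp
      linarith [key]
    rw [h1, ih]
    have hfac : ((2*(n+1))! : ℝ) = (2*(n:ℝ)+2) * (2*(n:ℝ)+1) * (2*n)! := by
      have h3 : 2*(n+1) = (2*n+1)+1 := by ring
      rw [h3, Nat.factorial_succ, Nat.factorial_succ]
      push_cast; ring
    rw [hfac, Nat.factorial_succ]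
    have h4 : (4:ℝ) ^ (n+1) = 4 * 4 ^ n := by ring
    rw [h4]
    have h5 : ((n:ℝ)+1) ≠ 0 := by positivity
    have h6 : (4:ℝ)^n ≠ 0 := by positivity
    have h7 : ((n !:ℝ)) ≠ 0 := by positivity
    push_cast
    field_simp
    ring

lemma moment_even (j : ℕ) : ∫ u : ℝ, u ^ (2*j) * Real.exp (-u ^ 2)
    = Real.sqrt π * (2*j)! / (4 ^ j * j !) := by
  have hint := integrable_pow_exp (2*j)
  have hsplit := MeasureTheory.integral_add_compl (measurableSet_Ioi (a := (0:ℝ))) hint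
  rw [compl_Ioi] at hsplit
  have heven : ∫ u in Iic (0:ℝ), u ^ (2*j) * Real.exp (-u ^ 2)
      = ∫ u in Ioi (0:ℝ), u ^ (2*j) * Real.exp (-u ^ 2) := by
    rw [← neg_zero, ← integral_comp_neg_Iic, neg_zero]
    apply setIntegral_congr_fun measurableSet_Iic
    intro x _
    simp [Even.neg_pow (even_two_mul j), neg_sq]
  rw [heven, moment_Ioi] at hsplit
  linarith [hsplit]

lemma sum_range_even {M : Type*} [AddCommMonoid M] (k : ℕ) (g : ℕ → M)
    (h : ∀ m, ¬ Even m → g m = 0) :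
    ∑ m ∈ Finset.range (k+1), g m = ∑ j ∈ Finset.range (k/2+1), g (2*j) := by
  induction k with
  | zero => simp
  | succ n ih =>
    rw [Finset.sum_range_succ, ih]
    rcases Nat.even_or_odd (n+1) with he | ho
    · obtain ⟨r, hr⟩ := he
      have h2 : (n+1)/2 = n/2 + 1 := by omega
      have h3 : 2*(n/2+1) = n+1 := by omega
      rw [h2, Finset.sum_range_succ (f := fun j => g (2*j)) (n := n/2+1), h3]
    · obtain ⟨r, hr⟩ := ho
      have h2 : (n+1)/2 = n/2 := by omega
      have h4 : ¬ Even (n+1) := by rw [Nat.even_iff]; omega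
      rw [h2, h (n+1) h4, add_zero]

open Complex in
lemma cmoment (m : ℕ) : ∫ u : ℝ, (u:ℂ) ^ m * Complex.exp (-(u:ℂ) ^ 2)
    = ((∫ u : ℝ, u ^ m * Real.exp (-u ^ 2) : ℝ) : ℂ) := by
  have heq : (fun u : ℝ => (u:ℂ) ^ m * Complex.exp (-(u:ℂ) ^ 2))
      = fun u : ℝ => ((u ^ m * Real.exp (-u ^ 2) : ℝ) : ℂ) := by
    funext u
    rw [Complex.ofReal_mul, Complex.ofReal_exp]
    push_cast
    ring_nf
  rw [heq]
  exact integral_ofReal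

open Complex in
lemma herm_integral (k : ℕ) (a : ℝ) :
    ∫ u : ℝ, ((a:ℂ) + (u:ℂ) * Complex.I) ^ k * Complex.exp (-(u:ℂ) ^ 2)
      = (Real.sqrt π : ℂ) * (Herm k a : ℝ) := by
  have hint : ∀ m : ℕ, Integrable (fun u : ℝ => (u:ℂ) ^ m * Complex.exp (-(u:ℂ) ^ 2)) := by
    intro m
    have : Integrable (fun u : ℝ => ((u ^ m * Real.exp (-u ^ 2) : ℝ) : ℂ)) :=
      (integrable_pow_exp m).ofReal
    apply this.congr
    filter_upwards with u
    push_cast [Complex.ofReal_exp]; norm_num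
  have expand : ∀ u : ℝ, ((a:ℂ) + (u:ℂ) * Complex.I) ^ k * Complex.exp (-(u:ℂ) ^ 2)
      = ∑ m ∈ Finset.range (k+1),
        ((k.choose m : ℂ) * (a:ℂ) ^ (k - m) * Complex.I ^ m) * ((u:ℂ) ^ m * Complex.exp (-(u:ℂ) ^ 2)) := by
    intro u
    rw [add_comm ((a:ℂ)) _, add_pow, Finset.sum_mul]
    congr 1
    funext m
    rw [mul_pow]
    ring
  simp_rw [expand]
  rw [integral_finset_sum _ (fun m _ => ((hint m).const_mul _))]
  have heval : ∀ m ∈ Finset.range (k+1),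
      ∫ u : ℝ, ((k.choose m : ℂ) * (a:ℂ) ^ (k - m) * Complex.I ^ m) * ((u:ℂ) ^ m * Complex.exp (-(u:ℂ) ^ 2))
      = ((k.choose m : ℂ) * (a:ℂ) ^ (k - m) * Complex.I ^ m)
          * ((∫ u : ℝ, u ^ m * Real.exp (-u ^ 2) : ℝ) : ℂ) := by
    intro m _
    rw [integral_const_mul, cmoment]
  rw [Finset.sum_congr rfl heval]
  rw [sum_range_even k (fun m => ((k.choose m : ℂ) * (a:ℂ) ^ (k - m) * Complex.I ^ m)
      * ((∫ u : ℝ, u ^ m * Real.exp (-u ^ 2) : ℝ) : ℂ))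
    (fun m hm => by simp [moment_odd hm])]
  rw [Herm, Complex.ofReal_sum, Finset.mul_sum]
  apply Finset.sum_congr rfl
  intro j hj
  have hjk : 2 * j ≤ k := by
    have := Finset.mem_range.mp hj
    omega
  rw [moment_even j]
  have hI : Complex.I ^ (2*j) = ((-1 : ℝ) ^ j : ℝ) := by
    rw [pow_mul, Complex.I_sq]; push_cast; ring
  rw [hI]
  have hchoose : (k.choose (2*j) : ℝ) * (2*j)! * (k - 2*j)! = k ! :=
    by exact_mod_cast congrArg (Nat.cast (R := ℝ)) (Nat.choose_mul_factorial_mul_factorial hjk)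
  have hreal : (k.choose (2*j) : ℝ) * a ^ (k - 2*j) * ((-1:ℝ)^j)
        * (Real.sqrt π * (2*j)! / (4 ^ j * j !))
      = Real.sqrt π * ((-1:ℝ)^j * ((k ! : ℝ) / ((j ! : ℝ) * ((k - 2*j)! : ℝ))) * a ^ (k - 2*j) / 2 ^ (2*j)) := by
    have h2j : ((2*j)! : ℝ) ≠ 0 := by positivity
    have hkj : (((k - 2*j)!) : ℝ) ≠ 0 := by positivity
    have hjf : ((j !) : ℝ) ≠ 0 := by positivity
    have h4 : ((4:ℝ)) ^ j ≠ 0 := by positivity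
    have h42 : ((2:ℝ)) ^ (2*j) = 4 ^ j := by rw [pow_mul]; norm_num
    rw [h42, ← hchoose]
    field_simp
  have hc := congrArg (Complex.ofReal) hreal
  push_cast at hc ⊢
  linear_combination hc

lemma pow_div_factorial_le_exp {q : ℝ} (hq : 0 ≤ q) (k : ℕ) : q ^ k / k ! ≤ Real.exp q := by
  refine le_trans ?_ (Real.sum_le_exp_of_nonneg hq (k+1))
  exact Finset.single_le_sum (f := fun i => q ^ i / (i ! : ℝ))
    (fun i _ => by positivity) (Finset.self_mem_range_succ k)

open Complex in
noncomputable def hfac (c : ℝ) (k : ℕ) (u : ℝ) : ℂ :=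
  ((c:ℂ) + (u:ℂ) * Complex.I) ^ k * Complex.exp (-(u:ℂ) ^ 2)

open Complex in
lemma norm_hfac (c : ℝ) (k : ℕ) (u : ℝ) :
    ‖hfac c k u‖ = Real.sqrt (c^2 + u^2) ^ k * Real.exp (-u^2) := by
  rw [hfac, norm_mul, norm_pow]
  congr 1
  · congr 1
    rw [Complex.norm_def, Complex.normSq_apply]
    simp [Complex.add_re, Complex.add_im, Complex.ofReal_re, Complex.ofReal_im]
    ring_nf
  · show ‖Complex.exp (-(u:ℂ)^2)‖ = Real.exp (-u^2)
    have : (-(u:ℂ)^2) = ((-u^2 : ℝ) : ℂ) := by push_cast; ring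
    rw [this, Complex.norm_exp, Complex.ofReal_re]

lemma sqrt_sq_add_sq_le (c u : ℝ) : Real.sqrt (c^2 + u^2) ^ 2 = c^2 + u^2 := by
  rw [Real.sq_sqrt (by positivity)]

open Complex in
lemma continuous_hfac (c : ℝ) (k : ℕ) : Continuous (hfac c k) := by
  apply Continuous.mul
  · exact ((continuous_const.add (Complex.continuous_ofReal.mul continuous_const)).pow k)
  · exact Complex.continuous_exp.comp ((Complex.continuous_ofReal.pow 2).neg)

open Complex in
lemma integrable_hfac (c : ℝ) (k : ℕ) : Integrable (hfac c k) := by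
  obtain ⟨C, hC, hb⟩ := pow_le_exp_sq k (by norm_num : (0:ℝ) < 1/2)
  have hint : Integrable (fun u : ℝ => (C * Real.exp (c^2/2)) * Real.exp (-(1/2) * u ^ 2)) :=
    ((integrable_exp_neg_mul_sq (by norm_num)).const_mul _)
  refine hint.mono' (continuous_hfac c k).aestronglyMeasurable ?_
  filter_upwards with u
  rw [norm_hfac]
  have h1 : Real.sqrt (c^2+u^2) ^ k ≤ C * Real.exp ((1/2) * (c^2+u^2)) := by
    have := hb (Real.sqrt (c^2+u^2)) (Real.sqrt_nonneg _)
    rwa [sqrt_sq_add_sq_le] at this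
  calc Real.sqrt (c^2+u^2) ^ k * Real.exp (-u^2)
      ≤ (C * Real.exp ((1/2) * (c^2+u^2))) * Real.exp (-u^2) :=
        mul_le_mul_of_nonneg_right h1 (Real.exp_pos _).le
    _ = C * Real.exp (c^2/2) * Real.exp (-(1/2) * u^2) := by
        rw [mul_assoc, mul_assoc, ← Real.exp_add, ← Real.exp_add]; ring_nf

open Complex in
noncomputable def Fterm (z a b : ℝ) (k : ℕ) (p : ℝ × ℝ) : ℂ :=
  ((2*z : ℂ) ^ k / (k ! : ℂ)) * (hfac a k p.1 * hfac b k p.2)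

open Complex in
lemma integral_Fterm (z a b : ℝ) (k : ℕ) :
    ∫ p : ℝ × ℝ, Fterm z a b k p
      = ((π * ((2*z) ^ k / (k ! : ℝ) * (Herm k a * Herm k b)) : ℝ) : ℂ) := by
  simp only [Fterm]
  rw [MeasureTheory.Measure.volume_eq_prod, integral_const_mul,
    integral_prod_mul (f := hfac a k) (g := hfac b k)]
  simp only [hfac]
  rw [herm_integral, herm_integral]
  have hpic : ((Real.sqrt π : ℝ) : ℂ) * ((Real.sqrt π : ℝ) : ℂ) = (π : ℂ) := by
    rw [← Complex.ofReal_mul, Real.mul_self_sqrt Real.pi_pos.le]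
  push_cast
  linear_combination ((2:ℂ)^k * (z:ℂ)^k / ((k ! : ℕ) : ℂ) * ((Herm k a : ℝ) : ℂ) * ((Herm k b : ℝ) : ℂ)) * hpic

-- the uniform bound
open Complex in
lemma norm_Fterm_le (z a b : ℝ) (hz0 : 0 < z) (hz1 : z < 1) (k : ℕ) (p : ℝ × ℝ) :
    ‖Fterm z a b k p‖ ≤ ((1+z)/2) ^ k *
      ((Real.exp ((2*z/(1+z)) * a^2) * Real.exp (-(1 - 2*z/(1+z)) * p.1^2)) *
       (Real.exp ((2*z/(1+z)) * b^2) * Real.exp (-(1 - 2*z/(1+z)) * p.2^2))) := by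
  set w : ℝ := (1+z)/2 with hw
  have hw0 : 0 < w := by positivity
  have hzw : z / w = 2*z/(1+z) := by rw [hw]; field_simp
  set X := Real.sqrt (a^2 + p.1^2) with hX
  set Y := Real.sqrt (b^2 + p.2^2) with hY
  have hX0 : 0 ≤ X := Real.sqrt_nonneg _
  have hY0 : 0 ≤ Y := Real.sqrt_nonneg _
  have hnorm : ‖Fterm z a b k p‖ = (2*z)^k / k ! * (X^k * Y^k) * (Real.exp (-p.1^2) * Real.exp (-p.2^2)) := by
    rw [Fterm, norm_mul, norm_mul, norm_hfac, norm_hfac, norm_div, norm_pow]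
    have h2z : ‖(2*z : ℂ)‖ = 2*z := by
      rw [show ((2*z : ℂ)) = ((2*z : ℝ) : ℂ) by push_cast; ring, Complex.norm_real,
        Real.norm_eq_abs, abs_of_pos (by linarith)]
    have hkf : ‖((k ! : ℕ) : ℂ)‖ = (k ! : ℝ) := by
      rw [Complex.norm_natCast]
    rw [h2z, hkf]
    ring
  rw [hnorm]
  have key : (2*z)^k / k ! * (X^k * Y^k) ≤ w^k * Real.exp ((z/w) * (X^2 + Y^2)) := by
    have h1 : (2*z)^k / k ! * (X^k * Y^k) = w^k * ((2*(z/w)*X*Y)^k / k !) := by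
      have hwne : w ≠ 0 := ne_of_gt hw0
      field_simp
      have hwk : w^k * w⁻¹^k = 1 := by rw [← mul_pow, mul_inv_cancel₀ hwne, one_pow]
      linear_combination (-(z^k*X^k*Y^k*2^k)) * hwk
    rw [h1]
    apply mul_le_mul_of_nonneg_left _ (by positivity)
    have hq : (0:ℝ) ≤ 2*(z/w)*X*Y := by positivity
    calc (2*(z/w)*X*Y)^k / k ! ≤ Real.exp (2*(z/w)*X*Y) := pow_div_factorial_le_exp hq k
      _ ≤ Real.exp ((z/w) * (X^2+Y^2)) := by
          apply Real.exp_le_exp.mpr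
          have h2 : 2*X*Y ≤ X^2 + Y^2 := by nlinarith [sq_nonneg (X - Y)]
          have hzw0 : 0 ≤ z/w := by positivity
          nlinarith
  have hXsq : X^2 = a^2 + p.1^2 := Real.sq_sqrt (by positivity)
  have hYsq : Y^2 = b^2 + p.2^2 := Real.sq_sqrt (by positivity)
  calc (2*z)^k / k ! * (X^k * Y^k) * (Real.exp (-p.1^2) * Real.exp (-p.2^2))
      ≤ (w^k * Real.exp ((z/w) * (X^2 + Y^2))) * (Real.exp (-p.1^2) * Real.exp (-p.2^2)) := by
        apply mul_le_mul_of_nonneg_right key (by positivity)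
    _ = w ^ k * ((Real.exp ((z/w) * a^2) * Real.exp (-(1 - z/w) * p.1^2)) *
       (Real.exp ((z/w) * b^2) * Real.exp (-(1 - z/w) * p.2^2))) := by
        rw [hXsq, hYsq, mul_assoc]
        congr 1
        simp only [← Real.exp_add]
        congr 1
        ring
    _ = ((1+z)/2) ^ k * ((Real.exp ((2*z/(1+z)) * a^2) * Real.exp (-(1 - 2*z/(1+z)) * p.1^2)) *
       (Real.exp ((2*z/(1+z)) * b^2) * Real.exp (-(1 - 2*z/(1+z)) * p.2^2))) := by
        rw [hzw, hw]

noncomputable def Gbound (z a b : ℝ) (p : ℝ × ℝ) : ℝ :=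
  (Real.exp ((2*z/(1+z)) * a^2) * Real.exp (-(1 - 2*z/(1+z)) * p.1^2)) *
  (Real.exp ((2*z/(1+z)) * b^2) * Real.exp (-(1 - 2*z/(1+z)) * p.2^2))

lemma d_pos {z : ℝ} (hz0 : 0 < z) (hz1 : z < 1) : 0 < 1 - 2*z/(1+z) := by
  rw [sub_pos, div_lt_one (by linarith)]
  linarith

lemma integrable_Gbound (z a b : ℝ) (hz0 : 0 < z) (hz1 : z < 1) :
    Integrable (Gbound z a b) := by
  have hd := d_pos hz0 hz1
  rw [MeasureTheory.Measure.volume_eq_prod]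
  exact Integrable.mul_prod
    (f := fun u : ℝ => Real.exp ((2*z/(1+z)) * a^2) * Real.exp (-(1 - 2*z/(1+z)) * u^2))
    (g := fun v : ℝ => Real.exp ((2*z/(1+z)) * b^2) * Real.exp (-(1 - 2*z/(1+z)) * v^2))
    (((integrable_exp_neg_mul_sq hd).const_mul _))
    (((integrable_exp_neg_mul_sq hd).const_mul _))

open Complex in
lemma continuous_Fterm (z a b : ℝ) (k : ℕ) : Continuous (Fterm z a b k) :=
  continuous_const.mul
    (((continuous_hfac a k).comp continuous_fst).mul ((continuous_hfac b k).comp continuous_snd))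

lemma integrable_Fterm (z a b : ℝ) (hz0 : 0 < z) (hz1 : z < 1) (k : ℕ) :
    Integrable (Fterm z a b k) := by
  refine (((integrable_Gbound z a b hz0 hz1).const_mul (((1+z)/2)^k)).mono'
    (continuous_Fterm z a b k).aestronglyMeasurable ?_)
  filter_upwards with p
  exact norm_Fterm_le z a b hz0 hz1 k p

lemma summable_norm_integral_Fterm (z a b : ℝ) (hz0 : 0 < z) (hz1 : z < 1) :
    Summable (fun k : ℕ => ∫ p : ℝ × ℝ, ‖Fterm z a b k p‖) := by
  have hG := integrable_Gbound z a b hz0 hz1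
  have hw0 : (0:ℝ) ≤ (1+z)/2 := by linarith
  have hw1 : (1+z)/2 < 1 := by linarith
  apply Summable.of_nonneg_of_le
    (fun k => integral_nonneg (fun p => norm_nonneg _))
    (fun k => ?_)
    (((summable_geometric_of_lt_one hw0 hw1)).mul_right (∫ p : ℝ × ℝ, Gbound z a b p))
  calc ∫ p : ℝ × ℝ, ‖Fterm z a b k p‖
      ≤ ∫ p : ℝ × ℝ, ((1+z)/2)^k * Gbound z a b p := by
        apply integral_mono ((integrable_Fterm z a b hz0 hz1 k).norm) (hG.const_mul _)
        intro p
        exact norm_Fterm_le z a b hz0 hz1 k p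
    _ = ((1+z)/2)^k * ∫ p : ℝ × ℝ, Gbound z a b p := integral_const_mul _ _

open Complex in
lemma tsum_Fterm (z a b : ℝ) (p : ℝ × ℝ) :
    ∑' k : ℕ, Fterm z a b k p
      = Complex.exp (2*(z:ℂ)*((a:ℂ)+(p.1:ℂ)*I)*((b:ℂ)+(p.2:ℂ)*I))
        * (Complex.exp (-(p.1:ℂ)^2) * Complex.exp (-(p.2:ℂ)^2)) := by
  have hre : ∀ k : ℕ, Fterm z a b k p
      = ((2*(z:ℂ)*((a:ℂ)+(p.1:ℂ)*I)*((b:ℂ)+(p.2:ℂ)*I))^k / (k ! : ℂ))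
        * (Complex.exp (-(p.1:ℂ)^2) * Complex.exp (-(p.2:ℂ)^2)) := by
    intro k
    rw [Fterm, hfac, hfac]
    simp only [mul_pow]
    ring
  simp_rw [hre]
  rw [tsum_mul_right]
  congr 1
  rw [Complex.exp_eq_exp_ℂ, NormedSpace.exp_eq_tsum_div]

open Complex in
lemma integrable_expfull (z a b : ℝ) (hz0 : 0 < z) (hz1 : z < 1) :
    Integrable (fun p : ℝ × ℝ =>
      Complex.exp (2*(z:ℂ)*((a:ℂ)+(p.1:ℂ)*I)*((b:ℂ)+(p.2:ℂ)*I))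
        * (Complex.exp (-(p.1:ℂ)^2) * Complex.exp (-(p.2:ℂ)^2))) := by
  have hmaj : Integrable (fun p : ℝ × ℝ =>
      (Real.exp (2*z*a*b) * Real.exp (-(1-z) * p.1^2)) * Real.exp (-(1-z) * p.2^2)) := by
    rw [MeasureTheory.Measure.volume_eq_prod]
    exact Integrable.mul_prod
      (f := fun u : ℝ => Real.exp (2*z*a*b) * Real.exp (-(1-z) * u^2))
      (g := fun v : ℝ => Real.exp (-(1-z) * v^2))
      ((integrable_exp_neg_mul_sq (by linarith)).const_mul _)
      (integrable_exp_neg_mul_sq (by linarith))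
  refine hmaj.mono' ?_ ?_
  · apply Continuous.aestronglyMeasurable
    apply Continuous.mul
    · exact Complex.continuous_exp.comp (by continuity)
    · exact ((Complex.continuous_exp.comp (by continuity)).mul
        (Complex.continuous_exp.comp (by continuity)))
  · filter_upwards with p
    rw [norm_mul, norm_mul,
      Complex.norm_exp, Complex.norm_exp, Complex.norm_exp]
    have hre1 : (2*(z:ℂ)*((a:ℂ)+(p.1:ℂ)*I)*((b:ℂ)+(p.2:ℂ)*I)).re = 2*z*(a*b - p.1*p.2) := by
      simp [Complex.mul_re, Complex.add_re, Complex.add_im, Complex.mul_im]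
      ring
    have hre2 : (-(p.1:ℂ)^2).re = -p.1^2 := by
      have : (-(p.1:ℂ)^2) = ((-p.1^2 : ℝ) : ℂ) := by push_cast; ring
      rw [this, Complex.ofReal_re]
    have hre3 : (-(p.2:ℂ)^2).re = -p.2^2 := by
      have : (-(p.2:ℂ)^2) = ((-p.2^2 : ℝ) : ℂ) := by push_cast; ring
      rw [this, Complex.ofReal_re]
    rw [hre1, hre2, hre3, ← Real.exp_add, ← Real.exp_add, ← Real.exp_add, ← Real.exp_add]
    apply Real.exp_le_exp.mpr
    nlinarith [sq_nonneg (p.1 + p.2), sq_nonneg (p.1 - p.2)]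

open Complex in
lemma gauss2 (z a b : ℝ) (hz0 : 0 < z) (hz1 : z < 1) :
    ∫ p : ℝ × ℝ, Complex.exp (2*(z:ℂ)*((a:ℂ)+(p.1:ℂ)*I)*((b:ℂ)+(p.2:ℂ)*I))
        * (Complex.exp (-(p.1:ℂ)^2) * Complex.exp (-(p.2:ℂ)^2))
      = ((π / Real.sqrt (1-z^2) : ℝ) : ℂ)
        * Complex.exp ((((2*a*b*z - (a^2+b^2)*z^2)/(1-z^2) : ℝ)) : ℂ) := by
  have h1z : (0:ℝ) < 1 - z^2 := by nlinarith
  have h1zc : ((z:ℂ)^2 - 1) ≠ 0 := by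
    intro h
    have : ((z:ℂ)^2 - 1) = (((z^2 - 1 : ℝ)) : ℂ) := by push_cast; ring
    rw [this] at h
    have := Complex.ofReal_eq_zero.mp h
    nlinarith
  rw [MeasureTheory.Measure.volume_eq_prod, integral_prod _ (by
    rw [← MeasureTheory.Measure.volume_eq_prod]; exact integrable_expfull z a b hz0 hz1)]
  have hinner : ∀ u : ℝ, (∫ v : ℝ, Complex.exp (2*(z:ℂ)*((a:ℂ)+(u:ℂ)*I)*((b:ℂ)+(v:ℂ)*I))
        * (Complex.exp (-(u:ℂ)^2) * Complex.exp (-(v:ℂ)^2)))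
      = ((Real.sqrt π : ℝ) : ℂ) * Complex.exp (((z:ℂ)^2-1) * (u:ℂ)^2
          + ((2*(z:ℂ)*(b:ℂ) - 2*(z:ℂ)^2*(a:ℂ)) * I) * (u:ℂ) + (2*(z:ℂ)*(a:ℂ)*(b:ℂ) - (z:ℂ)^2*(a:ℂ)^2)) := by
    intro u
    have hptw : ∀ v : ℝ, Complex.exp (2*(z:ℂ)*((a:ℂ)+(u:ℂ)*I)*((b:ℂ)+(v:ℂ)*I))
        * (Complex.exp (-(u:ℂ)^2) * Complex.exp (-(v:ℂ)^2))
        = Complex.exp ((-1) * (v:ℂ)^2 + (2*(z:ℂ)*((a:ℂ)+(u:ℂ)*I)*I) * (v:ℂ)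
            + (2*(z:ℂ)*((a:ℂ)+(u:ℂ)*I)*(b:ℂ) - (u:ℂ)^2)) := by
      intro v
      rw [← Complex.exp_add, ← Complex.exp_add]
      congr 1
      ring
    simp_rw [hptw]
    rw [integral_cexp_quadratic (by simp : (-1:ℂ).re < 0)]
    congr 1
    · have h2 : ((π : ℂ) / -(-1:ℂ)) = ((π : ℝ) : ℂ) := by norm_num
      rw [h2, show ((1:ℂ)/2) = ((1/2 : ℝ) : ℂ) by norm_num,
        ← Complex.ofReal_cpow Real.pi_pos.le]
      rw [show (π : ℝ) ^ ((1:ℝ)/2) = Real.sqrt π by rw [Real.sqrt_eq_rpow]]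
    · congr 1
      have hI2 : (I:ℂ)^2 = -1 := Complex.I_sq
      linear_combination ((z:ℂ)^2*((a:ℂ)^2+2*(a:ℂ)*(u:ℂ)*I) + (z:ℂ)^2*(u:ℂ)^2*(I^2-1)) * hI2
  simp_rw [hinner]
  rw [integral_const_mul]
  have hb3 : (((z:ℂ)^2 - 1)).re < 0 := by
    have : ((z:ℂ)^2 - 1) = (((z^2 - 1 : ℝ)) : ℂ) := by push_cast; ring
    rw [this, Complex.ofReal_re]; nlinarith
  rw [integral_cexp_quadratic hb3]
  have hc1 : ((π:ℂ) / -((z:ℂ)^2-1)) ^ ((1:ℂ)/2) = ((Real.sqrt (π/(1-z^2)) : ℝ) : ℂ) := by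
    have h2 : ((π:ℂ) / -((z:ℂ)^2-1)) = ((π/(1-z^2) : ℝ) : ℂ) := by push_cast; ring
    rw [h2, show ((1:ℂ)/2) = ((1/2 : ℝ) : ℂ) by norm_num,
      ← Complex.ofReal_cpow (by positivity), show (π/(1-z^2) : ℝ) ^ ((1:ℝ)/2) = Real.sqrt (π/(1-z^2)) by rw [Real.sqrt_eq_rpow]]
  rw [hc1]
  have hexp : (2*(z:ℂ)*(a:ℂ)*(b:ℂ) - (z:ℂ)^2*(a:ℂ)^2)
      - ((2*(z:ℂ)*(b:ℂ) - 2*(z:ℂ)^2*(a:ℂ)) * I)^2 / (4*((z:ℂ)^2-1))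
      = (((2*a*b*z - (a^2+b^2)*z^2)/(1-z^2) : ℝ) : ℂ) := by
    have h1zc' : ((1:ℂ) - (z:ℂ)^2) ≠ 0 := by
      intro h
      apply h1zc
      linear_combination -h
    rw [mul_pow, Complex.I_sq]
    push_cast
    field_simp
    ring
  rw [hexp]
  rw [show ((Real.sqrt π : ℝ) : ℂ) * (((Real.sqrt (π/(1-z^2)) : ℝ) : ℂ)
      * Complex.exp ((((2*a*b*z - (a^2+b^2)*z^2)/(1-z^2) : ℝ)) : ℂ))
    = (((Real.sqrt π * Real.sqrt (π/(1-z^2)) : ℝ)) : ℂ)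
      * Complex.exp ((((2*a*b*z - (a^2+b^2)*z^2)/(1-z^2) : ℝ)) : ℂ) by push_cast; ring]
  congr 2
  rw [Real.sqrt_div Real.pi_pos.le, ← mul_div_assoc, Real.mul_self_sqrt Real.pi_pos.le]

lemma mehler_core (z a b : ℝ) (hz0 : 0 < z) (hz1 : z < 1) :
    Summable (fun k : ℕ => |(2*z)^k / (k ! : ℝ) * (Herm k a * Herm k b)|) ∧
    ∑' k : ℕ, (2*z)^k / (k ! : ℝ) * (Herm k a * Herm k b)
      = Real.exp ((2*a*b*z - (a^2+b^2)*z^2)/(1-z^2)) / Real.sqrt (1-z^2) := by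
  set t : ℕ → ℝ := fun k => (2*z)^k / (k ! : ℝ) * (Herm k a * Herm k b) with ht
  have hnorm_sum := summable_norm_integral_Fterm z a b hz0 hz1
  have hbound : ∀ k : ℕ, |π * t k| ≤ ∫ p : ℝ × ℝ, ‖Fterm z a b k p‖ := by
    intro k
    calc |π * t k| = ‖((π * t k : ℝ) : ℂ)‖ := by rw [Complex.norm_real, Real.norm_eq_abs]
      _ = ‖∫ p : ℝ × ℝ, Fterm z a b k p‖ := by rw [integral_Fterm]
      _ ≤ ∫ p : ℝ × ℝ, ‖Fterm z a b k p‖ := norm_integral_le_integral_norm _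
  have hsum_pit : Summable (fun k => π * t k) := by
    apply Summable.of_norm_bounded hnorm_sum
    intro k
    rw [Real.norm_eq_abs]
    exact hbound k
  have hsum_t : Summable t := by
    have := hsum_pit.mul_left (1/π)
    apply this.congr
    intro k
    field_simp
  have habs : Summable (fun k : ℕ => |t k|) := hsum_t.abs
  refine ⟨habs, ?_⟩
  have hswap := integral_tsum_of_summable_integral_norm
    (fun k => integrable_Fterm z a b hz0 hz1 k) hnorm_sum
  have hL : ∑' k : ℕ, ∫ p : ℝ × ℝ, Fterm z a b k p = ((π * ∑' k, t k : ℝ) : ℂ) := by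
    have h1 : ∀ k : ℕ, ∫ p : ℝ × ℝ, Fterm z a b k p = ((π * t k : ℝ) : ℂ) :=
      fun k => integral_Fterm z a b k
    rw [tsum_congr h1, ← Complex.ofReal_tsum, tsum_mul_left]
  have hR : ∫ p : ℝ × ℝ, ∑' k : ℕ, Fterm z a b k p
      = ((π / Real.sqrt (1-z^2) * Real.exp ((2*a*b*z - (a^2+b^2)*z^2)/(1-z^2)) : ℝ) : ℂ) := by
    simp_rw [tsum_Fterm z a b]
    rw [gauss2 z a b hz0 hz1, Complex.ofReal_mul, Complex.ofReal_exp]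
  rw [hL, hR] at hswap
  have hre := Complex.ofReal_inj.mp hswap
  have hpi : (π:ℝ) ≠ 0 := Real.pi_ne_zero
  apply mul_left_cancel₀ hpi
  rw [hre]
  ring

/-- Mehler-type summation: for `0 < t < s` and real `x, y`, the series
`(1/√(2s)) Σ_k (t/s)^{k/2} H̃_k(y/√(2t)) H̃_k(x/√(2s))/m_k` converges absolutely,
sums to `e^{-(y-x)²/(2(s-t))}/√(2π(s-t)) · e^{x²/(2s)}`, and hence, after
multiplication by `e^{-x²/(2s)}`, to `e^{-(y-x)²/(2(s-t))}/√(2π(s-t))`. -/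
theorem mehler_heat_kernel (t s : ℝ) (ht : 0 < t) (hts : t < s) (x y : ℝ) :
    Summable (fun k : ℕ =>
      |(1 / Real.sqrt (2 * s)) * (t / s) ^ ((k : ℝ) / 2)
        * (Herm k (y / Real.sqrt (2 * t)) * Herm k (x / Real.sqrt (2 * s)) / mconst k)|) ∧
    (∑' k : ℕ, (1 / Real.sqrt (2 * s)) * (t / s) ^ ((k : ℝ) / 2)
        * (Herm k (y / Real.sqrt (2 * t)) * Herm k (x / Real.sqrt (2 * s)) / mconst k))
      = Real.exp (-((y - x) ^ 2) / (2 * (s - t))) / Real.sqrt (2 * Real.pi * (s - t))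
          * Real.exp (x ^ 2 / (2 * s)) ∧
    (∑' k : ℕ, (1 / Real.sqrt (2 * s)) * (t / s) ^ ((k : ℝ) / 2)
        * (Herm k (y / Real.sqrt (2 * t)) * Herm k (x / Real.sqrt (2 * s)) / mconst k)
        * Real.exp (-(x ^ 2) / (2 * s)))
      = Real.exp (-((y - x) ^ 2) / (2 * (s - t))) / Real.sqrt (2 * Real.pi * (s - t)) := by
  have hs : 0 < s := lt_trans ht hts
  have hst : 0 < s - t := by linarith
  set a : ℝ := y / Real.sqrt (2 * t) with ha
  set b : ℝ := x / Real.sqrt (2 * s) with hb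
  set z : ℝ := Real.sqrt (t / s) with hzdef
  have hz0 : 0 < z := Real.sqrt_pos.mpr (div_pos ht hs)
  have hz2 : z ^ 2 = t / s := Real.sq_sqrt (div_pos ht hs).le
  have hz1 : z < 1 := by
    nlinarith [hz2, (div_lt_one hs).mpr hts]
  obtain ⟨hsumm, hsum⟩ := mehler_core z a b hz0 hz1
  -- positive square roots
  have hs2 : (0:ℝ) < Real.sqrt (2*s) := Real.sqrt_pos.mpr (by linarith)
  have ht2 : (0:ℝ) < Real.sqrt (2*t) := Real.sqrt_pos.mpr (by linarith)
  have hsqpi : (0:ℝ) < Real.sqrt π := Real.sqrt_pos.mpr Real.pi_pos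
  set C : ℝ := 1 / (Real.sqrt (2*s) * Real.sqrt π) with hC
  have hC0 : 0 < C := by positivity
  -- rewrite each term
  have hterm : ∀ k : ℕ, (1 / Real.sqrt (2 * s)) * (t / s) ^ ((k : ℝ) / 2)
        * (Herm k a * Herm k b / mconst k)
      = C * ((2*z)^k / (k ! : ℝ) * (Herm k a * Herm k b)) := by
    intro k
    have hrw : (t/s : ℝ) ^ ((k:ℝ)/2) = z ^ k := by
      rw [show ((k:ℝ)/2) = (1/2) * (k:ℝ) by ring, Real.rpow_mul (div_pos ht hs).le,
        ← Real.sqrt_eq_rpow, Real.rpow_natCast]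
    rw [hrw, mconst, hC]
    have hkf : ((k ! : ℕ):ℝ) ≠ 0 := by positivity
    have h2k : ((2:ℝ)*z)^k = 2^k * z^k := mul_pow 2 z k
    rw [h2k]
    field_simp
  -- summability
  have claim1 : Summable (fun k : ℕ =>
      |(1 / Real.sqrt (2 * s)) * (t / s) ^ ((k : ℝ) / 2)
        * (Herm k a * Herm k b / mconst k)|) := by
    have := hsumm.mul_left C
    apply this.congr
    intro k
    simp only [hterm k, abs_mul, abs_of_pos hC0]
  -- the sqrt algebra
  have h1mz : 1 - z^2 = (s-t)/s := by
    rw [hz2]; field_simp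
  have hsq1 : Real.sqrt (1 - z^2) = Real.sqrt (s-t) / Real.sqrt s := by
    rw [h1mz, Real.sqrt_div hst.le]
  have hs2' : Real.sqrt (2*s) = Real.sqrt 2 * Real.sqrt s := Real.sqrt_mul (by norm_num) s
  have h2pis : Real.sqrt (2*π*(s-t)) = Real.sqrt 2 * Real.sqrt π * Real.sqrt (s-t) := by
    rw [Real.sqrt_mul (by positivity), Real.sqrt_mul (by norm_num)]
  have hCsq : C / Real.sqrt (1 - z^2) = 1 / Real.sqrt (2*π*(s-t)) := by
    rw [hC, hsq1, hs2', h2pis]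
    have h2 : (0:ℝ) < Real.sqrt 2 := by positivity
    have hss : (0:ℝ) < Real.sqrt s := Real.sqrt_pos.mpr hs
    have hstp : (0:ℝ) < Real.sqrt (s-t) := Real.sqrt_pos.mpr hst
    field_simp
  -- the exponent algebra
  have hss2 : Real.sqrt (2*s) * Real.sqrt (2*s) = 2*s := Real.mul_self_sqrt (by linarith)
  have hza : z * a = y / Real.sqrt (2*s) := by
    rw [hzdef, ha, Real.sqrt_div ht.le, hs2', show (2:ℝ)*t = 2*t by rfl]
    rw [show Real.sqrt (2*t) = Real.sqrt 2 * Real.sqrt t from Real.sqrt_mul (by norm_num) t]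
    have hsr2 : (0:ℝ) < Real.sqrt 2 := by positivity
    have hsrt : (0:ℝ) < Real.sqrt t := Real.sqrt_pos.mpr ht
    have hsrs : (0:ℝ) < Real.sqrt s := Real.sqrt_pos.mpr hs
    field_simp
  have ha2 : a^2 = y^2 / (2*t) := by
    rw [ha, div_pow, Real.sq_sqrt (by linarith : (0:ℝ) ≤ 2*t)]
  have hb2 : b^2 = x^2 / (2*s) := by
    rw [hb, div_pow, Real.sq_sqrt (by linarith : (0:ℝ) ≤ 2*s)]
  have h1 : 2*a*b*z = x*y/s := by
    have hd : Real.sqrt (2*s) ^ 2 = 2*s := Real.sq_sqrt (by linarith)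
    have heq : 2*a*b*z = 2*(z*a)*b := by ring
    rw [heq, hza, hb]
    calc 2*(y/Real.sqrt (2*s))*(x/Real.sqrt (2*s)) = 2*x*y/(Real.sqrt (2*s)^2) := by ring
      _ = 2*x*y/(2*s) := by rw [hd]
      _ = x*y/s := by field_simp
  have h2 : a^2*z^2 = y^2/(2*s) := by
    rw [ha2, hz2]
    field_simp
  have h3 : b^2*z^2 = t*x^2/(2*s^2) := by
    rw [hb2, hz2]
    field_simp
  have hnum : 2*a*b*z - (a^2+b^2)*z^2 = x*y/s - y^2/(2*s) - t*x^2/(2*s^2) := by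
    linear_combination h1 - h2 - h3
  have hE : (2*a*b*z - (a^2+b^2)*z^2)/(1-z^2)
      = -((y-x)^2)/(2*(s-t)) + x^2/(2*s) := by
    rw [hnum, h1mz]
    have hsne : s ≠ 0 := ne_of_gt hs
    have hstne : s - t ≠ 0 := ne_of_gt hst
    field_simp
    ring
  -- claim 2
  have claim2 : (∑' k : ℕ, (1 / Real.sqrt (2 * s)) * (t / s) ^ ((k : ℝ) / 2)
        * (Herm k a * Herm k b / mconst k))
      = Real.exp (-((y - x) ^ 2) / (2 * (s - t))) / Real.sqrt (2 * π * (s - t))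
          * Real.exp (x ^ 2 / (2 * s)) := by
    rw [tsum_congr hterm, tsum_mul_left, hsum, hE]
    rw [Real.exp_add]
    rw [show C * (Real.exp (-(y-x)^2/(2*(s-t))) * Real.exp (x^2/(2*s)) / Real.sqrt (1-z^2))
        = (C / Real.sqrt (1-z^2)) * Real.exp (-(y-x)^2/(2*(s-t))) * Real.exp (x^2/(2*s)) by ring,
      hCsq]
    ring
  refine ⟨claim1, claim2, ?_⟩
  rw [tsum_mul_right, claim2, mul_assoc, ← Real.exp_add,
    show x^2/(2*s) + -(x^2)/(2*s) = 0 by ring, Real.exp_zero, mul_one]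
end
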